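/- arXiv:1907.02347 — 2 statements merged into one kernel-verified Lean document; each statement's English description precedes it below -/
import Mathlib

section
/- Let M be a nonempty set and N a nonempty compact topological space, and let h : M × N → ℝ be concave-convexlike, i.e. (i) for all x₁, x₂ ∈ M and α ∈ [0,1] there exists x ∈ M such that α·h(x₁,y) + (1−α)·h(x₂,y) ≤ h(x,y) for all y ∈ N, and (ii) for all y₁, y₂ ∈ N and α ∈ [0,1] there exists y ∈ N such that α·h(x,y₁) + (1−α)·h(x,y₂) ≥ h(x,y) for all x ∈ M. If y ↦ h(x,y) is lower semicontinuous on N for every x ∈ M, then sup_{x∈M} inf_{y∈N} h(x,y) = inf_{y∈N} sup_{x∈M} h(x,y) (equality in the extended reals), and the infimum on the right-hand side is attained at some y* ∈ N. -/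
/-!
Kneser's argument. For a level `c` above `sup_x inf_y h x y`, the closed sublevel sets
`{y | h x y ≤ c}` have the finite intersection property, so by compactness they have a common
point `y`, and then `sup_x h x y ≤ c`.

For two points `x₁, x₂` this is a connectedness argument on `[0, 1]`: every mixture
`α h x₁ + (1 - α) h x₂` drops below `c` somewhere, the mixtures that do so at a point where
`h x₁ ≤ c`, resp. `h x₂ ≤ c`, form two open sets covering `[0, 1]`, and a common parameter of both
yields, by convexlikeness, a point where both functions are at most `c`. The general finite case
follows by induction, restricting `N` to a sublevel set `{y | h x₀ y ≤ c'}`: the restricted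
function stays concave-convexlike, and the two-point case keeps its `sup inf` below `c`.
-/

open Set

section ConcaveConvexLike

variable {M N : Type*} {h : M → N → ℝ}

def ConcaveLike (h : M → N → ℝ) : Prop :=
  ∀ x₁ x₂ : M, ∀ α ∈ Icc (0 : ℝ) 1, ∃ x : M, ∀ y : N, α * h x₁ y + (1 - α) * h x₂ y ≤ h x y

def ConvexLike (h : M → N → ℝ) : Prop :=
  ∀ y₁ y₂ : N, ∀ α ∈ Icc (0 : ℝ) 1, ∃ y : N, ∀ x : M, h x y ≤ α * h x y₁ + (1 - α) * h x y₂

theorem ConcaveLike.comp_right {N' : Type*} (hconc : ConcaveLike h) (g : N' → N) :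
    ConcaveLike fun x y => h x (g y) :=
  fun x₁ x₂ α hα => (hconc x₁ x₂ α hα).imp fun _ hx y => hx (g y)

theorem ConvexLike.subtype_sublevel (hconv : ConvexLike h) (x₀ : M) (c : ℝ) :
    ConvexLike fun x (y : {y // h x₀ y ≤ c}) => h x y := by
  intro y₁ y₂ α hα
  obtain ⟨y, hy⟩ := hconv y₁ y₂ α hα
  exact ⟨⟨y, by nlinarith [hy x₀, y₁.2, y₂.2, hα.1, hα.2]⟩, hy⟩

/-- Where the segment from `(p, q)` to `(r, s)` crosses the line `u = c`, it lies in the open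
half-plane `α u + (1 - α) v < c` containing both ends, so there `v < c`. -/
theorem exists_convexCombination_le_le {p q r s c α : ℝ} (hp : p ≤ c) (hr : c < r)
    (hα : α ∈ Icc (0 : ℝ) 1) (hpq : α * p + (1 - α) * q < c) (hrs : α * r + (1 - α) * s < c) :
    ∃ t ∈ Icc (0 : ℝ) 1, t * p + (1 - t) * r ≤ c ∧ t * q + (1 - t) * s ≤ c := by
  have hrp : 0 < r - p := by linarith
  set t := (r - c) / (r - p)
  have ht₀ : 0 ≤ t := div_nonneg (by linarith) hrp.le
  have ht₁ : t ≤ 1 := (div_le_one hrp).2 (by linarith)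
  have hu : t * p + (1 - t) * r = c := by
    simp only [t]; field_simp; ring
  have hmix : α * c + (1 - α) * (t * q + (1 - t) * s) < c := by
    rw [← hu]; nlinarith
  refine ⟨t, ⟨ht₀, ht₁⟩, hu.le, ?_⟩
  nlinarith [hα.2]

theorem ConvexLike.exists_le_le_of_forall_mix_lt (hconv : ConvexLike h) {x₁ x₂ : M} {c : ℝ}
    (hmix : ∀ α ∈ Icc (0 : ℝ) 1, ∃ y, α * h x₁ y + (1 - α) * h x₂ y < c) :
    ∃ y, h x₁ y ≤ c ∧ h x₂ y ≤ c := by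
  let mixLt (y : N) : Set ℝ := {α | α * h x₁ y + (1 - α) * h x₂ y < c}
  have hopen : ∀ y, IsOpen (mixLt y) := fun y => isOpen_lt (by fun_prop) continuous_const
  let U := ⋃ y ∈ {y | h x₁ y ≤ c}, mixLt y
  let V := ⋃ y ∈ {y | h x₂ y ≤ c}, mixLt y
  have hcover : Icc (0 : ℝ) 1 ⊆ U ∪ V := by
    intro α hα
    obtain ⟨y, hy⟩ := hmix α hα
    by_cases hy₁ : h x₁ y ≤ c
    · exact Or.inl (mem_biUnion hy₁ hy)
    · have hy₂ : h x₂ y ≤ c := by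
        by_contra hy₂
        nlinarith [hα.1, hα.2]
      exact Or.inr (mem_biUnion hy₂ hy)
  have hU : (Icc (0 : ℝ) 1 ∩ U).Nonempty := by
    obtain ⟨y, hy⟩ := hmix 1 (by norm_num)
    exact ⟨1, by norm_num, mem_biUnion (show h x₁ y ≤ c by linarith) hy⟩
  have hV : (Icc (0 : ℝ) 1 ∩ V).Nonempty := by
    obtain ⟨y, hy⟩ := hmix 0 (by norm_num)
    exact ⟨0, by norm_num, mem_biUnion (show h x₂ y ≤ c by linarith) hy⟩
  obtain ⟨α, hα, hαU, hαV⟩ := isPreconnected_Icc U V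
    (isOpen_biUnion fun y _ => hopen y) (isOpen_biUnion fun y _ => hopen y) hcover hU hV
  obtain ⟨yU, hyU, hU⟩ := mem_iUnion₂.1 hαU
  obtain ⟨yV, hyV, hV⟩ := mem_iUnion₂.1 hαV
  by_cases hyV₁ : h x₁ yV ≤ c
  · exact ⟨yV, hyV₁, hyV⟩
  obtain ⟨t, ht, ht₁, ht₂⟩ := exists_convexCombination_le_le hyU (not_le.1 hyV₁) hα hU hV
  obtain ⟨y, hy⟩ := hconv yU yV t ht
  exact ⟨y, (hy x₁).trans ht₁, (hy x₂).trans ht₂⟩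

variable {c : ℝ}

theorem exists_lt_of_iSup_iInf_lt (hc : ⨆ x, ⨅ y, (h x y : EReal) < c) (x : M) :
    ∃ y, h x y < c := by
  obtain ⟨y, hy⟩ := iInf_lt_iff.1 ((le_iSup (fun x => ⨅ y, (h x y : EReal)) x).trans_lt hc)
  exact ⟨y, EReal.coe_lt_coe_iff.1 hy⟩

theorem exists_le_le_of_iSup_iInf_lt (hconc : ConcaveLike h) (hconv : ConvexLike h)
    (hc : ⨆ x, ⨅ y, (h x y : EReal) < c) (x₁ x₂ : M) : ∃ y, h x₁ y ≤ c ∧ h x₂ y ≤ c :=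
  hconv.exists_le_le_of_forall_mix_lt fun α hα => by
    obtain ⟨x, hx⟩ := hconc x₁ x₂ α hα
    obtain ⟨y, hy⟩ := exists_lt_of_iSup_iInf_lt hc x
    exact ⟨y, (hx y).trans_lt hy⟩

theorem exists_forall_mem_le_of_iSup_iInf_lt [Nonempty N] (hconc : ConcaveLike h)
    (hconv : ConvexLike h) (hc : ⨆ x, ⨅ y, (h x y : EReal) < c) (s : Finset M) :
    ∃ y, ∀ x ∈ s, h x y ≤ c := by
  classical
  induction s using Finset.induction_on generalizing N c with
  | empty => exact ⟨Classical.arbitrary N, by simp⟩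
  | insert x₀ s _ ih =>
    obtain ⟨c', hc', hc'c⟩ := EReal.exists_between_coe_real hc
    have : Nonempty {y // h x₀ y ≤ c'} :=
      let ⟨y, hy⟩ := exists_lt_of_iSup_iInf_lt hc' x₀
      ⟨⟨y, hy.le⟩⟩
    have hc'' : ⨆ x, ⨅ y : {y // h x₀ y ≤ c'}, (h x y : EReal) < c := by
      refine lt_of_le_of_lt (iSup_le fun x => ?_) hc'c
      obtain ⟨y, hy₀, hy⟩ := exists_le_le_of_iSup_iInf_lt hconc hconv hc' x₀ x
      exact (iInf_le _ ⟨y, hy₀⟩).trans (EReal.coe_le_coe_iff.2 hy)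
    obtain ⟨y, hy⟩ := ih (hconc.comp_right Subtype.val) (hconv.subtype_sublevel x₀ c') hc''
    exact ⟨y, (Finset.forall_mem_insert _ _ _).2 ⟨y.2.trans (EReal.coe_lt_coe_iff.1 hc'c).le, hy⟩⟩

theorem exists_forall_le_of_iSup_iInf_lt [TopologicalSpace N] [CompactSpace N] [Nonempty N]
    (hconc : ConcaveLike h) (hconv : ConvexLike h) (hlsc : ∀ x, LowerSemicontinuous (h x))
    (hc : ⨆ x, ⨅ y, (h x y : EReal) < c) : ∃ y, ∀ x, h x y ≤ c := by
  obtain ⟨y, hy⟩ := CompactSpace.iInter_nonempty (t := fun x => {y | h x y ≤ c})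
    (fun x => (hlsc x).isClosed_preimage c) fun s => by
      obtain ⟨y, hy⟩ := exists_forall_mem_le_of_iSup_iInf_lt hconc hconv hc s
      exact ⟨y, mem_iInter₂.2 hy⟩
  exact ⟨y, by simpa using hy⟩

end ConcaveConvexLike

theorem minimax_kneser_fan_sion_general {M : Type*} {N : Type*}
    [TopologicalSpace N] [CompactSpace N] [Nonempty N]
    (h : M → N → ℝ)
    (hconc : ∀ x₁ x₂ : M, ∀ α : ℝ, α ∈ Set.Icc (0 : ℝ) 1 →
      ∃ x : M, ∀ y : N, α * h x₁ y + (1 - α) * h x₂ y ≤ h x y)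
    (hconv : ∀ y₁ y₂ : N, ∀ α : ℝ, α ∈ Set.Icc (0 : ℝ) 1 →
      ∃ y : N, ∀ x : M, h x y ≤ α * h x y₁ + (1 - α) * h x y₂)
    (hlsc : ∀ x : M, LowerSemicontinuous fun y : N => h x y) :
    (⨆ x : M, ⨅ y : N, (h x y : EReal)) = (⨅ y : N, ⨆ x : M, (h x y : EReal)) ∧
    ∃ y' : N, (⨆ x : M, (h x y' : EReal)) = ⨅ y : N, ⨆ x : M, (h x y : EReal) := by
  have hφ : LowerSemicontinuous fun y => ⨆ x, (h x y : EReal) :=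
    lowerSemicontinuous_iSup fun x =>
      continuous_coe_real_ereal.comp_lowerSemicontinuous (hlsc x) fun _ _ => EReal.coe_le_coe
  obtain ⟨y', -, hy'⟩ :=
    (hφ.lowerSemicontinuousOn univ).exists_isMinOn univ_nonempty isCompact_univ
  have hmin : ⨅ y, ⨆ x, (h x y : EReal) = ⨆ x, (h x y' : EReal) :=
    le_antisymm (iInf_le _ y') (le_iInf fun y => hy' (mem_univ y))
  refine ⟨le_antisymm (iSup_iInf_le_iInf_iSup _) ?_, y', hmin.symm⟩
  refine EReal.le_of_forall_lt_iff_le.1 fun c hc => ?_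
  obtain ⟨y, hy⟩ := exists_forall_le_of_iSup_iInf_lt hconc hconv hlsc hc
  exact (iInf_le _ y).trans (iSup_le fun x => EReal.coe_le_coe_iff.2 (hy x))

/-- General minimax theorem of Kneser, Fan, Sion: if `M` is a nonempty set, `N` a nonempty
compact topological space, `h : M × N → ℝ` is concave-convexlike and lower semicontinuous
in the second variable, then `sup_x inf_y h x y = inf_y sup_x h x y` in the extended reals,
and the infimum on the right-hand side is attained. -/
theorem minimax_kneser_fan_sion {M : Type*} {N : Type*} [Nonempty M]
    [TopologicalSpace N] [CompactSpace N] [Nonempty N]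
    (h : M → N → ℝ)
    (hconc : ∀ x₁ x₂ : M, ∀ α : ℝ, α ∈ Set.Icc (0 : ℝ) 1 →
      ∃ x : M, ∀ y : N, α * h x₁ y + (1 - α) * h x₂ y ≤ h x y)
    (hconv : ∀ y₁ y₂ : N, ∀ α : ℝ, α ∈ Set.Icc (0 : ℝ) 1 →
      ∃ y : N, ∀ x : M, h x y ≤ α * h x y₁ + (1 - α) * h x y₂)
    (hlsc : ∀ x : M, LowerSemicontinuous fun y : N => h x y) :
    (⨆ x : M, ⨅ y : N, (h x y : EReal)) = (⨅ y : N, ⨆ x : M, (h x y : EReal)) ∧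
    ∃ y' : N, (⨆ x : M, (h x y' : EReal)) = ⨅ y : N, ⨆ x : M, (h x y : EReal) :=
  minimax_kneser_fan_sion_general h hconc hconv hlsc
end

section
/- Define c : [0,1] → ℝ by c(μ) := min{10μ, 10(1−μ)}, and define the operator T on functions f : [0,1] → ℝ by (T f)(μ) := min{ c(μ), 1 + ((1/3)μ + (2/3)(1−μ))·f(μ/(2−μ)) + ((2/3)μ + (1/3)(1−μ))·f(2μ/(1+μ)) }. Then (T c)(μ) = 10μ for 0 ≤ μ ≤ 13/30, (T c)(μ) = 13/3 for 13/30 < μ ≤ 17/30, and (T c)(μ) = 10(1−μ) for 17/30 < μ ≤ 1; i.e. T c = C₁ where C₁ : [0,1] → ℝ is the function defined piecewise by these three formulas. -/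
/-- Terminal cost in the Bernoulli hypothesis-testing example: `c(μ) = min{10μ, 10(1−μ)}`. -/
noncomputable def cCost (μ : ℝ) : ℝ := min (10 * μ) (10 * (1 - μ))

/-- One-step value iteration operator of the Bernoulli hypothesis-testing example:
either stop (cost `c(μ)`) or pay `1` for one more observation and update the belief to
`μ/(2−μ)` (success) or `2μ/(1+μ)` (failure). -/
noncomputable def Topt (f : ℝ → ℝ) (μ : ℝ) : ℝ :=
  min (cCost μ)
    (1 + ((1 / 3) * μ + (2 / 3) * (1 - μ)) * f (μ / (2 - μ)) +
      ((2 / 3) * μ + (1 / 3) * (1 - μ)) * f (2 * μ / (1 + μ)))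

/-- The one-step value function `C₁` of the example. -/
noncomputable def C₁ (μ : ℝ) : ℝ :=
  if μ ≤ 13 / 30 then 10 * μ else if μ ≤ 17 / 30 then 13 / 3 else 10 * (1 - μ)

/-! Weighting the cost of a posterior `a / w` by the probability `w` of the observation that
produced it cancels the normalisation, because `cCost` is positively homogeneous. The expected
cost of one more observation is then a sum of two minima of affine functions, which collapses to
`min (1 + 10μ) (13/3) (11 − 10μ)`; against the stopping cost only the plateau `13/3` survives. -/

theorem mul_cCost_div {a w : ℝ} (hw : 0 < w) :
    w * cCost (a / w) = min (10 * a) (10 * (w - a)) := by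
  rw [cCost, mul_min_of_nonneg _ _ hw.le]
  congr 1 <;> field_simp

theorem one_add_min_add_min (μ : ℝ) :
    1 + min (10 * μ / 3) (20 * (1 - μ) / 3) + min (20 * μ / 3) (10 * (1 - μ) / 3) =
      min (min (1 + 10 * μ) (13 / 3)) (11 - 10 * μ) := by
  simp only [min_def]
  split_ifs <;> linarith

theorem Topt_cCost_eq_min {μ : ℝ} (h₁ : -1 < μ) (h₂ : μ < 2) :
    Topt cCost μ = min (min (10 * μ) (13 / 3)) (10 * (1 - μ)) := by
  have success : ((1 / 3) * μ + (2 / 3) * (1 - μ)) * cCost (μ / (2 - μ)) =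
      min (10 * μ / 3) (20 * (1 - μ) / 3) := by
    have hw : 0 < (1 / 3) * μ + (2 / 3) * (1 - μ) := by linarith
    rw [show μ / (2 - μ) = (μ / 3) / ((1 / 3) * μ + (2 / 3) * (1 - μ)) by
      field_simp; ring, mul_cCost_div hw]
    congr 1 <;> ring
  have failure : ((2 / 3) * μ + (1 / 3) * (1 - μ)) * cCost (2 * μ / (1 + μ)) =
      min (20 * μ / 3) (10 * (1 - μ) / 3) := by
    have hw : 0 < (2 / 3) * μ + (1 / 3) * (1 - μ) := by linarith
    rw [show 2 * μ / (1 + μ) = (2 * μ / 3) / ((2 / 3) * μ + (1 / 3) * (1 - μ)) by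
      field_simp; ring, mul_cCost_div hw]
    congr 1 <;> ring
  rw [Topt, success, failure, one_add_min_add_min, cCost]
  simp only [min_def]
  split_ifs <;> linarith

theorem C₁_eq_min (μ : ℝ) : C₁ μ = min (min (10 * μ) (13 / 3)) (10 * (1 - μ)) := by
  simp only [C₁, min_def]
  split_ifs <;> linarith

theorem Topt_cCost_eq_C₁_of_mem_Ioo {μ : ℝ} (h₁ : -1 < μ) (h₂ : μ < 2) :
    Topt cCost μ = C₁ μ := by
  rw [Topt_cCost_eq_min h₁ h₂, C₁_eq_min]

/-- One step of value iteration applied to the terminal cost yields `C₁`: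
`(T c)(μ) = 10μ` on `[0, 13/30]`, `(T c)(μ) = 13/3` on `(13/30, 17/30]`, and
`(T c)(μ) = 10(1−μ)` on `(17/30, 1]`. -/
theorem Topt_cCost_eq_C₁ :
    (∀ μ : ℝ, 0 ≤ μ → μ ≤ 13 / 30 → Topt cCost μ = 10 * μ) ∧
    (∀ μ : ℝ, 13 / 30 < μ → μ ≤ 17 / 30 → Topt cCost μ = 13 / 3) ∧
    (∀ μ : ℝ, 17 / 30 < μ → μ ≤ 1 → Topt cCost μ = 10 * (1 - μ)) ∧
    (∀ μ ∈ Set.Icc (0 : ℝ) 1, Topt cCost μ = C₁ μ) := by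
  refine ⟨fun μ h₀ h => ?_, fun μ hl hu => ?_, fun μ hl hu => ?_, fun μ hμ => ?_⟩
  · rw [Topt_cCost_eq_C₁_of_mem_Ioo (by linarith) (by linarith), C₁, if_pos h]
  · rw [Topt_cCost_eq_C₁_of_mem_Ioo (by linarith) (by linarith), C₁, if_neg (not_le.2 hl),
      if_pos hu]
  · rw [Topt_cCost_eq_C₁_of_mem_Ioo (by linarith) (by linarith), C₁,
      if_neg (by linarith), if_neg (not_le.2 hl)]
  · exact Topt_cCost_eq_C₁_of_mem_Ioo (by linarith [hμ.1]) (by linarith [hμ.2])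
end
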